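/- Consider subsets S of the 9-point lattice square ([0,2]×[0,2]) ∩ ℤ² that contain all four vertices (0,0), (2,0), (0,2), (2,2). Declare two such subsets S, S' equivalent if there exist M ∈ GL₂(ℤ) and u ∈ ℤ² with S' = {M·s + u : s ∈ S}. Then there are exactly 12 equivalence classes of such subsets. -/
import Mathlib


/-- The affine lattice transformation `s ↦ M·s + u` of `ℤ²`, determined by a
matrix `M` and a translation vector `u`. -/
def affAct (M : Matrix (Fin 2) (Fin 2) ℤ) (u : ℤ × ℤ) (s : ℤ × ℤ) : ℤ × ℤ :=
  (M 0 0 * s.1 + M 0 1 * s.2 + u.1, M 1 0 * s.1 + M 1 1 * s.2 + u.2)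

/-- The nine lattice points of the square `[0,2] × [0,2]`. -/
def square : Set (ℤ × ℤ) := {p | 0 ≤ p.1 ∧ p.1 ≤ 2 ∧ 0 ≤ p.2 ∧ p.2 ≤ 2}

/-- The four vertices of the square `[0,2] × [0,2]`. -/
def verts : Set (ℤ × ℤ) := {(0, 0), (2, 0), (0, 2), (2, 2)}

/-- A configuration: a subset of the lattice square `([0,2] × [0,2]) ∩ ℤ²`
containing all four vertices. -/
def Config : Type := {S : Set (ℤ × ℤ) // verts ⊆ S ∧ S ⊆ square}

/-- Two configurations are equivalent if one is the image of the other under an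
affine lattice transformation `s ↦ M·s + u` with `M ∈ GL₂(ℤ)` (an integer
matrix of determinant `±1`) and `u ∈ ℤ²`. -/
def equivRel (S S' : Config) : Prop :=
  ∃ M : Matrix (Fin 2) (Fin 2) ℤ, (M.det = 1 ∨ M.det = -1) ∧
    ∃ u : ℤ × ℤ, S'.1 = affAct M u '' S.1

/- ### auxiliary development -/

abbrev TT : Type := Bool × Bool × Bool × Bool × Bool

def bi (x : Bool) : ℤ := if x then 1 else 0

lemma bi_eq_one {x : Bool} : bi x = 1 ↔ x = true := by cases x <;> simp [bi]

open Classical in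
noncomputable def pbit (p : Prop) : Bool := if p then true else false

lemma pbit_eq (p : Prop) (x : Bool) (h : p ↔ x = true) : pbit p = x := by
  by_cases hp : p
  · simp [pbit, hp, (h.mp hp).symm]
  · have hx : x = false := by
      cases x
      · rfl
      · exact absurd (h.mpr rfl) hp
    simp [pbit, hp, hx]

lemma of_pbit {p : Prop} (h : bi (pbit p) = 1) : p := by
  by_cases hp : p
  · exact hp
  · simp [pbit, hp, bi] at h

lemma pbit_of {p : Prop} (h : p) : bi (pbit p) = 1 := by
  simp [pbit, bi, h]

def E (a b c d e : Bool) : Set (ℤ × ℤ) :=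
  {p | p = (0,0) ∨ p = (2,0) ∨ p = (0,2) ∨ p = (2,2) ∨
    (bi a = 1 ∧ p = (1,1)) ∨ (bi b = 1 ∧ p = (1,0)) ∨ (bi c = 1 ∧ p = (2,1)) ∨
    (bi d = 1 ∧ p = (1,2)) ∨ (bi e = 1 ∧ p = (0,1))}

def E5 (t : TT) : Set (ℤ × ℤ) := E t.1 t.2.1 t.2.2.1 t.2.2.2.1 t.2.2.2.2

lemma mem_E_c {a b c d e : Bool} : ((1,1) : ℤ×ℤ) ∈ E a b c d e ↔ bi a = 1 := by
  cases a <;> simp [E, bi, Prod.ext_iff]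

lemma mem_E_1 {a b c d e : Bool} : ((1,0) : ℤ×ℤ) ∈ E a b c d e ↔ bi b = 1 := by
  cases b <;> simp [E, bi, Prod.ext_iff]

lemma mem_E_2 {a b c d e : Bool} : ((2,1) : ℤ×ℤ) ∈ E a b c d e ↔ bi c = 1 := by
  cases c <;> simp [E, bi, Prod.ext_iff]

lemma mem_E_3 {a b c d e : Bool} : ((1,2) : ℤ×ℤ) ∈ E a b c d e ↔ bi d = 1 := by
  cases d <;> simp [E, bi, Prod.ext_iff]

lemma mem_E_4 {a b c d e : Bool} : ((0,1) : ℤ×ℤ) ∈ E a b c d e ↔ bi e = 1 := by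
  cases e <;> simp [E, bi, Prod.ext_iff]

lemma bi_inj {x y : Bool} (h : bi x = 1 ↔ bi y = 1) : x = y := by
  cases x <;> cases y <;> simp_all [bi]

lemma E5_inj {s t : TT} (h : E5 s = E5 t) : s = t := by
  obtain ⟨a,b,c,d,e⟩ := s; obtain ⟨a',b',c',d',e'⟩ := t
  have h0 : ((1,1) : ℤ×ℤ) ∈ E a b c d e ↔ ((1,1) : ℤ×ℤ) ∈ E a' b' c' d' e' := Set.ext_iff.mp h (1,1)
  have h1 : ((1,0) : ℤ×ℤ) ∈ E a b c d e ↔ ((1,0) : ℤ×ℤ) ∈ E a' b' c' d' e' := Set.ext_iff.mp h (1,0)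
  have h2 : ((2,1) : ℤ×ℤ) ∈ E a b c d e ↔ ((2,1) : ℤ×ℤ) ∈ E a' b' c' d' e' := Set.ext_iff.mp h (2,1)
  have h3 : ((1,2) : ℤ×ℤ) ∈ E a b c d e ↔ ((1,2) : ℤ×ℤ) ∈ E a' b' c' d' e' := Set.ext_iff.mp h (1,2)
  have h4 : ((0,1) : ℤ×ℤ) ∈ E a b c d e ↔ ((0,1) : ℤ×ℤ) ∈ E a' b' c' d' e' := Set.ext_iff.mp h (0,1)
  rw [mem_E_c, mem_E_c] at h0
  rw [mem_E_1, mem_E_1] at h1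
  rw [mem_E_2, mem_E_2] at h2
  rw [mem_E_3, mem_E_3] at h3
  rw [mem_E_4, mem_E_4] at h4
  simp only [Prod.mk.injEq]
  exact ⟨bi_inj h0, bi_inj h1, bi_inj h2, bi_inj h3, bi_inj h4⟩

noncomputable def tupT (S : Config) : TT :=
  (pbit ((1,1) ∈ S.1), pbit ((1,0) ∈ S.1), pbit ((2,1) ∈ S.1),
   pbit ((1,2) ∈ S.1), pbit ((0,1) ∈ S.1))

lemma nine (p : ℤ×ℤ) (hp : p ∈ square) :
    p = (0,0) ∨ p = (2,0) ∨ p = (0,2) ∨ p = (2,2) ∨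
    p = (1,1) ∨ p = (1,0) ∨ p = (2,1) ∨ p = (1,2) ∨ p = (0,1) := by
  obtain ⟨p1,p2⟩ := p
  simp only [square, Set.mem_setOf_eq] at hp
  simp only [Prod.mk.injEq]
  omega

lemma cfg_eq (S : Config) : S.1 = E5 (tupT S) := by
  ext p
  constructor
  · intro hp
    rcases nine p (S.2.2 hp) with rfl|rfl|rfl|rfl|rfl|rfl|rfl|rfl|rfl
    · exact Or.inl rfl
    · exact Or.inr (Or.inl rfl)
    · exact Or.inr (Or.inr (Or.inl rfl))
    · exact Or.inr (Or.inr (Or.inr (Or.inl rfl)))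
    · exact Or.inr (Or.inr (Or.inr (Or.inr (Or.inl ⟨pbit_of hp, rfl⟩))))
    · exact Or.inr (Or.inr (Or.inr (Or.inr (Or.inr (Or.inl ⟨pbit_of hp, rfl⟩)))))
    · exact Or.inr (Or.inr (Or.inr (Or.inr (Or.inr (Or.inr (Or.inl ⟨pbit_of hp, rfl⟩))))))
    · exact Or.inr (Or.inr (Or.inr (Or.inr (Or.inr (Or.inr (Or.inr (Or.inl ⟨pbit_of hp, rfl⟩)))))))
    · exact Or.inr (Or.inr (Or.inr (Or.inr (Or.inr (Or.inr (Or.inr (Or.inr ⟨pbit_of hp, rfl⟩)))))))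
  · intro hp
    rcases hp with rfl|rfl|rfl|rfl|⟨h,rfl⟩|⟨h,rfl⟩|⟨h,rfl⟩|⟨h,rfl⟩|⟨h,rfl⟩
    · exact S.2.1 (by simp [verts])
    · exact S.2.1 (by simp [verts])
    · exact S.2.1 (by simp [verts])
    · exact S.2.1 (by simp [verts])
    · exact of_pbit h
    · exact of_pbit h
    · exact of_pbit h
    · exact of_pbit h
    · exact of_pbit h

lemma E_sub_square (t : TT) : E5 t ⊆ square := by
  obtain ⟨a,b,c,d,e⟩ := t
  intro p hp
  rcases hp with rfl|rfl|rfl|rfl|⟨-,rfl⟩|⟨-,rfl⟩|⟨-,rfl⟩|⟨-,rfl⟩|⟨-,rfl⟩ <;>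
    simp [square]

lemma verts_sub_E (t : TT) : verts ⊆ E5 t := by
  obtain ⟨a,b,c,d,e⟩ := t
  intro p hp
  simp only [verts, Set.mem_insert_iff, Set.mem_singleton_iff] at hp
  rcases hp with rfl|rfl|rfl|rfl
  · exact Or.inl rfl
  · exact Or.inr (Or.inl rfl)
  · exact Or.inr (Or.inr (Or.inl rfl))
  · exact Or.inr (Or.inr (Or.inr (Or.inl rfl)))

def perm1 (t : TT) : TT := (t.1, t.2.1, t.2.2.1, t.2.2.2.1, t.2.2.2.2)
def perm2 (t : TT) : TT := (t.1, t.2.2.2.2, t.2.1, t.2.2.1, t.2.2.2.1)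
def perm3 (t : TT) : TT := (t.1, t.2.2.2.1, t.2.2.2.2, t.2.1, t.2.2.1)
def perm4 (t : TT) : TT := (t.1, t.2.2.1, t.2.2.2.1, t.2.2.2.2, t.2.1)
def perm5 (t : TT) : TT := (t.1, t.2.1, t.2.2.2.2, t.2.2.2.1, t.2.2.1)
def perm6 (t : TT) : TT := (t.1, t.2.2.2.1, t.2.2.1, t.2.1, t.2.2.2.2)
def perm7 (t : TT) : TT := (t.1, t.2.2.2.2, t.2.2.2.1, t.2.2.1, t.2.1)
def perm8 (t : TT) : TT := (t.1, t.2.2.1, t.2.1, t.2.2.2.2, t.2.2.2.1)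

lemma img1 (M : Matrix (Fin 2) (Fin 2) ℤ) (u : ℤ × ℤ)
    (h00 : M 0 0 = 1) (h01 : M 0 1 = 0) (h10 : M 1 0 = 0) (h11 : M 1 1 = 1)
    (hu1 : u.1 = 0) (hu2 : u.2 = 0) (t : TT) :
    affAct M u '' E5 t = E5 (perm1 t) := by
  obtain ⟨a,b,c,d,e⟩ := t
  show affAct M u '' E a b c d e = E a b c d e
  ext ⟨p1, p2⟩
  simp only [Set.mem_image, E, Set.mem_setOf_eq, Prod.mk.injEq, and_true, true_and,
    affAct, h00, h01, h10, h11, hu1, hu2, Prod.exists]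
  constructor
  · rintro ⟨q1, q2, hq, rfl, rfl⟩
    rcases hq with ⟨rfl,rfl⟩|⟨rfl,rfl⟩|⟨rfl,rfl⟩|⟨rfl,rfl⟩|⟨h,rfl,rfl⟩|⟨h,rfl,rfl⟩|⟨h,rfl,rfl⟩|⟨h,rfl,rfl⟩|⟨h,rfl,rfl⟩ <;> simp_all
  · intro hp
    rcases hp with ⟨rfl,rfl⟩|⟨rfl,rfl⟩|⟨rfl,rfl⟩|⟨rfl,rfl⟩|⟨h,rfl,rfl⟩|⟨h,rfl,rfl⟩|⟨h,rfl,rfl⟩|⟨h,rfl,rfl⟩|⟨h,rfl,rfl⟩ <;>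
      [refine ⟨0,0,?_,?_,?_⟩;
       refine ⟨2,0,?_,?_,?_⟩;
       refine ⟨0,2,?_,?_,?_⟩;
       refine ⟨2,2,?_,?_,?_⟩;
       refine ⟨1,1,?_,?_,?_⟩;
       refine ⟨1,0,?_,?_,?_⟩;
       refine ⟨2,1,?_,?_,?_⟩;
       refine ⟨1,2,?_,?_,?_⟩;
       refine ⟨0,1,?_,?_,?_⟩] <;> simp_all

lemma img2 (M : Matrix (Fin 2) (Fin 2) ℤ) (u : ℤ × ℤ)
    (h00 : M 0 0 = 0) (h01 : M 0 1 = -1) (h10 : M 1 0 = 1) (h11 : M 1 1 = 0)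
    (hu1 : u.1 = 2) (hu2 : u.2 = 0) (t : TT) :
    affAct M u '' E5 t = E5 (perm2 t) := by
  obtain ⟨a,b,c,d,e⟩ := t
  show affAct M u '' E a b c d e = E a e b c d
  ext ⟨p1, p2⟩
  simp only [Set.mem_image, E, Set.mem_setOf_eq, Prod.mk.injEq, and_true, true_and,
    affAct, h00, h01, h10, h11, hu1, hu2, Prod.exists]
  constructor
  · rintro ⟨q1, q2, hq, rfl, rfl⟩
    rcases hq with ⟨rfl,rfl⟩|⟨rfl,rfl⟩|⟨rfl,rfl⟩|⟨rfl,rfl⟩|⟨h,rfl,rfl⟩|⟨h,rfl,rfl⟩|⟨h,rfl,rfl⟩|⟨h,rfl,rfl⟩|⟨h,rfl,rfl⟩ <;> simp_all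
  · intro hp
    rcases hp with ⟨rfl,rfl⟩|⟨rfl,rfl⟩|⟨rfl,rfl⟩|⟨rfl,rfl⟩|⟨h,rfl,rfl⟩|⟨h,rfl,rfl⟩|⟨h,rfl,rfl⟩|⟨h,rfl,rfl⟩|⟨h,rfl,rfl⟩ <;>
      [refine ⟨0,2,?_,?_,?_⟩;
       refine ⟨0,0,?_,?_,?_⟩;
       refine ⟨2,2,?_,?_,?_⟩;
       refine ⟨2,0,?_,?_,?_⟩;
       refine ⟨1,1,?_,?_,?_⟩;
       refine ⟨0,1,?_,?_,?_⟩;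
       refine ⟨1,0,?_,?_,?_⟩;
       refine ⟨2,1,?_,?_,?_⟩;
       refine ⟨1,2,?_,?_,?_⟩] <;> simp_all

lemma img3 (M : Matrix (Fin 2) (Fin 2) ℤ) (u : ℤ × ℤ)
    (h00 : M 0 0 = -1) (h01 : M 0 1 = 0) (h10 : M 1 0 = 0) (h11 : M 1 1 = -1)
    (hu1 : u.1 = 2) (hu2 : u.2 = 2) (t : TT) :
    affAct M u '' E5 t = E5 (perm3 t) := by
  obtain ⟨a,b,c,d,e⟩ := t
  show affAct M u '' E a b c d e = E a d e b c
  ext ⟨p1, p2⟩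
  simp only [Set.mem_image, E, Set.mem_setOf_eq, Prod.mk.injEq, and_true, true_and,
    affAct, h00, h01, h10, h11, hu1, hu2, Prod.exists]
  constructor
  · rintro ⟨q1, q2, hq, rfl, rfl⟩
    rcases hq with ⟨rfl,rfl⟩|⟨rfl,rfl⟩|⟨rfl,rfl⟩|⟨rfl,rfl⟩|⟨h,rfl,rfl⟩|⟨h,rfl,rfl⟩|⟨h,rfl,rfl⟩|⟨h,rfl,rfl⟩|⟨h,rfl,rfl⟩ <;> simp_all
  · intro hp
    rcases hp with ⟨rfl,rfl⟩|⟨rfl,rfl⟩|⟨rfl,rfl⟩|⟨rfl,rfl⟩|⟨h,rfl,rfl⟩|⟨h,rfl,rfl⟩|⟨h,rfl,rfl⟩|⟨h,rfl,rfl⟩|⟨h,rfl,rfl⟩ <;>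
      [refine ⟨2,2,?_,?_,?_⟩;
       refine ⟨0,2,?_,?_,?_⟩;
       refine ⟨2,0,?_,?_,?_⟩;
       refine ⟨0,0,?_,?_,?_⟩;
       refine ⟨1,1,?_,?_,?_⟩;
       refine ⟨1,2,?_,?_,?_⟩;
       refine ⟨0,1,?_,?_,?_⟩;
       refine ⟨1,0,?_,?_,?_⟩;
       refine ⟨2,1,?_,?_,?_⟩] <;> simp_all

lemma img4 (M : Matrix (Fin 2) (Fin 2) ℤ) (u : ℤ × ℤ)
    (h00 : M 0 0 = 0) (h01 : M 0 1 = 1) (h10 : M 1 0 = -1) (h11 : M 1 1 = 0)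
    (hu1 : u.1 = 0) (hu2 : u.2 = 2) (t : TT) :
    affAct M u '' E5 t = E5 (perm4 t) := by
  obtain ⟨a,b,c,d,e⟩ := t
  show affAct M u '' E a b c d e = E a c d e b
  ext ⟨p1, p2⟩
  simp only [Set.mem_image, E, Set.mem_setOf_eq, Prod.mk.injEq, and_true, true_and,
    affAct, h00, h01, h10, h11, hu1, hu2, Prod.exists]
  constructor
  · rintro ⟨q1, q2, hq, rfl, rfl⟩
    rcases hq with ⟨rfl,rfl⟩|⟨rfl,rfl⟩|⟨rfl,rfl⟩|⟨rfl,rfl⟩|⟨h,rfl,rfl⟩|⟨h,rfl,rfl⟩|⟨h,rfl,rfl⟩|⟨h,rfl,rfl⟩|⟨h,rfl,rfl⟩ <;> simp_all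
  · intro hp
    rcases hp with ⟨rfl,rfl⟩|⟨rfl,rfl⟩|⟨rfl,rfl⟩|⟨rfl,rfl⟩|⟨h,rfl,rfl⟩|⟨h,rfl,rfl⟩|⟨h,rfl,rfl⟩|⟨h,rfl,rfl⟩|⟨h,rfl,rfl⟩ <;>
      [refine ⟨2,0,?_,?_,?_⟩;
       refine ⟨2,2,?_,?_,?_⟩;
       refine ⟨0,0,?_,?_,?_⟩;
       refine ⟨0,2,?_,?_,?_⟩;
       refine ⟨1,1,?_,?_,?_⟩;
       refine ⟨2,1,?_,?_,?_⟩;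
       refine ⟨1,2,?_,?_,?_⟩;
       refine ⟨0,1,?_,?_,?_⟩;
       refine ⟨1,0,?_,?_,?_⟩] <;> simp_all

lemma img5 (M : Matrix (Fin 2) (Fin 2) ℤ) (u : ℤ × ℤ)
    (h00 : M 0 0 = -1) (h01 : M 0 1 = 0) (h10 : M 1 0 = 0) (h11 : M 1 1 = 1)
    (hu1 : u.1 = 2) (hu2 : u.2 = 0) (t : TT) :
    affAct M u '' E5 t = E5 (perm5 t) := by
  obtain ⟨a,b,c,d,e⟩ := t
  show affAct M u '' E a b c d e = E a b e d c
  ext ⟨p1, p2⟩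
  simp only [Set.mem_image, E, Set.mem_setOf_eq, Prod.mk.injEq, and_true, true_and,
    affAct, h00, h01, h10, h11, hu1, hu2, Prod.exists]
  constructor
  · rintro ⟨q1, q2, hq, rfl, rfl⟩
    rcases hq with ⟨rfl,rfl⟩|⟨rfl,rfl⟩|⟨rfl,rfl⟩|⟨rfl,rfl⟩|⟨h,rfl,rfl⟩|⟨h,rfl,rfl⟩|⟨h,rfl,rfl⟩|⟨h,rfl,rfl⟩|⟨h,rfl,rfl⟩ <;> simp_all
  · intro hp
    rcases hp with ⟨rfl,rfl⟩|⟨rfl,rfl⟩|⟨rfl,rfl⟩|⟨rfl,rfl⟩|⟨h,rfl,rfl⟩|⟨h,rfl,rfl⟩|⟨h,rfl,rfl⟩|⟨h,rfl,rfl⟩|⟨h,rfl,rfl⟩ <;>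
      [refine ⟨2,0,?_,?_,?_⟩;
       refine ⟨0,0,?_,?_,?_⟩;
       refine ⟨2,2,?_,?_,?_⟩;
       refine ⟨0,2,?_,?_,?_⟩;
       refine ⟨1,1,?_,?_,?_⟩;
       refine ⟨1,0,?_,?_,?_⟩;
       refine ⟨0,1,?_,?_,?_⟩;
       refine ⟨1,2,?_,?_,?_⟩;
       refine ⟨2,1,?_,?_,?_⟩] <;> simp_all

lemma img6 (M : Matrix (Fin 2) (Fin 2) ℤ) (u : ℤ × ℤ)
    (h00 : M 0 0 = 1) (h01 : M 0 1 = 0) (h10 : M 1 0 = 0) (h11 : M 1 1 = -1)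
    (hu1 : u.1 = 0) (hu2 : u.2 = 2) (t : TT) :
    affAct M u '' E5 t = E5 (perm6 t) := by
  obtain ⟨a,b,c,d,e⟩ := t
  show affAct M u '' E a b c d e = E a d c b e
  ext ⟨p1, p2⟩
  simp only [Set.mem_image, E, Set.mem_setOf_eq, Prod.mk.injEq, and_true, true_and,
    affAct, h00, h01, h10, h11, hu1, hu2, Prod.exists]
  constructor
  · rintro ⟨q1, q2, hq, rfl, rfl⟩
    rcases hq with ⟨rfl,rfl⟩|⟨rfl,rfl⟩|⟨rfl,rfl⟩|⟨rfl,rfl⟩|⟨h,rfl,rfl⟩|⟨h,rfl,rfl⟩|⟨h,rfl,rfl⟩|⟨h,rfl,rfl⟩|⟨h,rfl,rfl⟩ <;> simp_all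
  · intro hp
    rcases hp with ⟨rfl,rfl⟩|⟨rfl,rfl⟩|⟨rfl,rfl⟩|⟨rfl,rfl⟩|⟨h,rfl,rfl⟩|⟨h,rfl,rfl⟩|⟨h,rfl,rfl⟩|⟨h,rfl,rfl⟩|⟨h,rfl,rfl⟩ <;>
      [refine ⟨0,2,?_,?_,?_⟩;
       refine ⟨2,2,?_,?_,?_⟩;
       refine ⟨0,0,?_,?_,?_⟩;
       refine ⟨2,0,?_,?_,?_⟩;
       refine ⟨1,1,?_,?_,?_⟩;
       refine ⟨1,2,?_,?_,?_⟩;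
       refine ⟨2,1,?_,?_,?_⟩;
       refine ⟨1,0,?_,?_,?_⟩;
       refine ⟨0,1,?_,?_,?_⟩] <;> simp_all

lemma img7 (M : Matrix (Fin 2) (Fin 2) ℤ) (u : ℤ × ℤ)
    (h00 : M 0 0 = 0) (h01 : M 0 1 = 1) (h10 : M 1 0 = 1) (h11 : M 1 1 = 0)
    (hu1 : u.1 = 0) (hu2 : u.2 = 0) (t : TT) :
    affAct M u '' E5 t = E5 (perm7 t) := by
  obtain ⟨a,b,c,d,e⟩ := t
  show affAct M u '' E a b c d e = E a e d c b
  ext ⟨p1, p2⟩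
  simp only [Set.mem_image, E, Set.mem_setOf_eq, Prod.mk.injEq, and_true, true_and,
    affAct, h00, h01, h10, h11, hu1, hu2, Prod.exists]
  constructor
  · rintro ⟨q1, q2, hq, rfl, rfl⟩
    rcases hq with ⟨rfl,rfl⟩|⟨rfl,rfl⟩|⟨rfl,rfl⟩|⟨rfl,rfl⟩|⟨h,rfl,rfl⟩|⟨h,rfl,rfl⟩|⟨h,rfl,rfl⟩|⟨h,rfl,rfl⟩|⟨h,rfl,rfl⟩ <;> simp_all
  · intro hp
    rcases hp with ⟨rfl,rfl⟩|⟨rfl,rfl⟩|⟨rfl,rfl⟩|⟨rfl,rfl⟩|⟨h,rfl,rfl⟩|⟨h,rfl,rfl⟩|⟨h,rfl,rfl⟩|⟨h,rfl,rfl⟩|⟨h,rfl,rfl⟩ <;>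
      [refine ⟨0,0,?_,?_,?_⟩;
       refine ⟨0,2,?_,?_,?_⟩;
       refine ⟨2,0,?_,?_,?_⟩;
       refine ⟨2,2,?_,?_,?_⟩;
       refine ⟨1,1,?_,?_,?_⟩;
       refine ⟨0,1,?_,?_,?_⟩;
       refine ⟨1,2,?_,?_,?_⟩;
       refine ⟨2,1,?_,?_,?_⟩;
       refine ⟨1,0,?_,?_,?_⟩] <;> simp_all

lemma img8 (M : Matrix (Fin 2) (Fin 2) ℤ) (u : ℤ × ℤ)
    (h00 : M 0 0 = 0) (h01 : M 0 1 = -1) (h10 : M 1 0 = -1) (h11 : M 1 1 = 0)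
    (hu1 : u.1 = 2) (hu2 : u.2 = 2) (t : TT) :
    affAct M u '' E5 t = E5 (perm8 t) := by
  obtain ⟨a,b,c,d,e⟩ := t
  show affAct M u '' E a b c d e = E a c b e d
  ext ⟨p1, p2⟩
  simp only [Set.mem_image, E, Set.mem_setOf_eq, Prod.mk.injEq, and_true, true_and,
    affAct, h00, h01, h10, h11, hu1, hu2, Prod.exists]
  constructor
  · rintro ⟨q1, q2, hq, rfl, rfl⟩
    rcases hq with ⟨rfl,rfl⟩|⟨rfl,rfl⟩|⟨rfl,rfl⟩|⟨rfl,rfl⟩|⟨h,rfl,rfl⟩|⟨h,rfl,rfl⟩|⟨h,rfl,rfl⟩|⟨h,rfl,rfl⟩|⟨h,rfl,rfl⟩ <;> simp_all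
  · intro hp
    rcases hp with ⟨rfl,rfl⟩|⟨rfl,rfl⟩|⟨rfl,rfl⟩|⟨rfl,rfl⟩|⟨h,rfl,rfl⟩|⟨h,rfl,rfl⟩|⟨h,rfl,rfl⟩|⟨h,rfl,rfl⟩|⟨h,rfl,rfl⟩ <;>
      [refine ⟨2,2,?_,?_,?_⟩;
       refine ⟨2,0,?_,?_,?_⟩;
       refine ⟨0,2,?_,?_,?_⟩;
       refine ⟨0,0,?_,?_,?_⟩;
       refine ⟨1,1,?_,?_,?_⟩;
       refine ⟨2,1,?_,?_,?_⟩;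
       refine ⟨1,0,?_,?_,?_⟩;
       refine ⟨0,1,?_,?_,?_⟩;
       refine ⟨1,2,?_,?_,?_⟩] <;> simp_all

/- ### classification of admissible transformations -/

lemma classify' (a b c d u1 u2 : ℤ)
    (hdet : a * d - b * c = 1 ∨ a * d - b * c = -1)
    (H : 0 ≤ u1 ∧ u1 ≤ 2 ∧ 0 ≤ u2 ∧ u2 ≤ 2 ∧
       0 ≤ 2*a + u1 ∧ 2*a + u1 ≤ 2 ∧ 0 ≤ 2*c + u2 ∧ 2*c + u2 ≤ 2 ∧
       0 ≤ 2*b + u1 ∧ 2*b + u1 ≤ 2 ∧ 0 ≤ 2*d + u2 ∧ 2*d + u2 ≤ 2 ∧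
       0 ≤ 2*a + 2*b + u1 ∧ 2*a + 2*b + u1 ≤ 2 ∧ 0 ≤ 2*c + 2*d + u2 ∧ 2*c + 2*d + u2 ≤ 2) :
    (a = 1 ∧ b = 0 ∧ c = 0 ∧ d = 1 ∧ u1 = 0 ∧ u2 = 0) ∨
    (a = 0 ∧ b = -1 ∧ c = 1 ∧ d = 0 ∧ u1 = 2 ∧ u2 = 0) ∨
    (a = -1 ∧ b = 0 ∧ c = 0 ∧ d = -1 ∧ u1 = 2 ∧ u2 = 2) ∨
    (a = 0 ∧ b = 1 ∧ c = -1 ∧ d = 0 ∧ u1 = 0 ∧ u2 = 2) ∨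
    (a = -1 ∧ b = 0 ∧ c = 0 ∧ d = 1 ∧ u1 = 2 ∧ u2 = 0) ∨
    (a = 1 ∧ b = 0 ∧ c = 0 ∧ d = -1 ∧ u1 = 0 ∧ u2 = 2) ∨
    (a = 0 ∧ b = 1 ∧ c = 1 ∧ d = 0 ∧ u1 = 0 ∧ u2 = 0) ∨
    (a = 0 ∧ b = -1 ∧ c = -1 ∧ d = 0 ∧ u1 = 2 ∧ u2 = 2) := by
  obtain ⟨h1,h2,h3,h4,h5,h6,h7,h8,h9,h10,h11,h12,h13,h14,h15,h16⟩ := H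
  have ha1 : -1 ≤ a := by omega
  have ha2 : a ≤ 1 := by omega
  have hb1 : -1 ≤ b := by omega
  have hb2 : b ≤ 1 := by omega
  have hc1 : -1 ≤ c := by omega
  have hc2 : c ≤ 1 := by omega
  have hd1 : -1 ≤ d := by omega
  have hd2 : d ≤ 1 := by omega
  interval_cases a <;> interval_cases b <;> interval_cases c <;> interval_cases d <;>
    first
    | (exfalso; omega)
    | (norm_num; omega)

/- ### the invariant -/

def g (t : TT) : Fin 12 :=
  let n : ℕ := (cond t.2.1 1 0) + (cond t.2.2.1 1 0) + (cond t.2.2.2.1 1 0) + (cond t.2.2.2.2 1 0)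
  let base : Fin 12 :=
    if n = 0 then 0 else if n = 1 then 1
    else if n = 2 then (if (t.2.1 && t.2.2.2.1) || (t.2.2.1 && t.2.2.2.2) then 3 else 2)
    else if n = 3 then 4 else 5
  if t.1 then base + 6 else base

def repT (i : Fin 12) : TT :=
  match i.val with
  | 0 => (false,false,false,false,false)
  | 1 => (false,true,false,false,false)
  | 2 => (false,true,true,false,false)
  | 3 => (false,true,false,true,false)
  | 4 => (false,true,true,true,false)
  | 5 => (false,true,true,true,true)
  | 6 => (true,false,false,false,false)
  | 7 => (true,true,false,false,false)
  | 8 => (true,true,true,false,false)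
  | 9 => (true,true,false,true,false)
  | 10 => (true,true,true,true,false)
  | _ => (true,true,true,true,true)


lemma g_repT : ∀ i : Fin 12, g (repT i) = i := by decide

lemma ginv1 : ∀ t : TT, g (perm1 t) = g t := by decide
lemma ginv2 : ∀ t : TT, g (perm2 t) = g t := by decide
lemma ginv3 : ∀ t : TT, g (perm3 t) = g t := by decide
lemma ginv4 : ∀ t : TT, g (perm4 t) = g t := by decide
lemma ginv5 : ∀ t : TT, g (perm5 t) = g t := by decide
lemma ginv6 : ∀ t : TT, g (perm6 t) = g t := by decide
lemma ginv7 : ∀ t : TT, g (perm7 t) = g t := by decide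
lemma ginv8 : ∀ t : TT, g (perm8 t) = g t := by decide

set_option synthInstance.maxSize 2000 in
set_option maxHeartbeats 1000000 in
lemma exists_sigma : ∀ t : TT,
    perm1 (repT (g t)) = t ∨ perm2 (repT (g t)) = t ∨ perm3 (repT (g t)) = t ∨
    perm4 (repT (g t)) = t ∨ perm5 (repT (g t)) = t ∨ perm6 (repT (g t)) = t ∨
    perm7 (repT (g t)) = t ∨ perm8 (repT (g t)) = t := by decide

/- ### representatives -/

def repC (i : Fin 12) : Config := ⟨E5 (repT i), verts_sub_E _, E_sub_square _⟩

lemma tupT_E (t : TT) (h : verts ⊆ E5 t ∧ E5 t ⊆ square) : tupT (⟨E5 t, h⟩ : Config) = t := by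
  obtain ⟨a,b,c,d,e⟩ := t
  simp only [tupT, Prod.mk.injEq]
  exact ⟨pbit_eq _ _ (mem_E_c.trans bi_eq_one), pbit_eq _ _ (mem_E_1.trans bi_eq_one),
    pbit_eq _ _ (mem_E_2.trans bi_eq_one), pbit_eq _ _ (mem_E_3.trans bi_eq_one),
    pbit_eq _ _ (mem_E_4.trans bi_eq_one)⟩

/- ### invariance of the classifying map -/

lemma equiv_tup {S S' : Config} (h : equivRel S S') : g (tupT S') = g (tupT S) := by
  obtain ⟨M, hdet, u, himg⟩ := h
  have hmem : ∀ v ∈ verts, affAct M u v ∈ square := by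
    intro v hv
    exact S'.2.2 (himg ▸ Set.mem_image_of_mem _ (S.2.1 hv))
  have k1 := hmem (0,0) (by simp [verts])
  have k2 := hmem (2,0) (by simp [verts])
  have k3 := hmem (0,2) (by simp [verts])
  have k4 := hmem (2,2) (by simp [verts])
  simp only [affAct, square, Set.mem_setOf_eq] at k1 k2 k3 k4
  norm_num at k1 k2 k3 k4
  rw [Matrix.det_fin_two] at hdet
  have key := classify' (M 0 0) (M 0 1) (M 1 0) (M 1 1) u.1 u.2 hdet (by omega)
  rcases key with ⟨h00,h01,h10,h11,hu1,hu2⟩|⟨h00,h01,h10,h11,hu1,hu2⟩|⟨h00,h01,h10,h11,hu1,hu2⟩|⟨h00,h01,h10,h11,hu1,hu2⟩|⟨h00,h01,h10,h11,hu1,hu2⟩|⟨h00,h01,h10,h11,hu1,hu2⟩|⟨h00,h01,h10,h11,hu1,hu2⟩|⟨h00,h01,h10,h11,hu1,hu2⟩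
  · have ht : tupT S' = perm1 (tupT S) :=
      E5_inj (by rw [← cfg_eq S', himg, cfg_eq S]; exact img1 M u h00 h01 h10 h11 hu1 hu2 _)
    rw [ht, ginv1]
  · have ht : tupT S' = perm2 (tupT S) :=
      E5_inj (by rw [← cfg_eq S', himg, cfg_eq S]; exact img2 M u h00 h01 h10 h11 hu1 hu2 _)
    rw [ht, ginv2]
  · have ht : tupT S' = perm3 (tupT S) :=
      E5_inj (by rw [← cfg_eq S', himg, cfg_eq S]; exact img3 M u h00 h01 h10 h11 hu1 hu2 _)
    rw [ht, ginv3]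
  · have ht : tupT S' = perm4 (tupT S) :=
      E5_inj (by rw [← cfg_eq S', himg, cfg_eq S]; exact img4 M u h00 h01 h10 h11 hu1 hu2 _)
    rw [ht, ginv4]
  · have ht : tupT S' = perm5 (tupT S) :=
      E5_inj (by rw [← cfg_eq S', himg, cfg_eq S]; exact img5 M u h00 h01 h10 h11 hu1 hu2 _)
    rw [ht, ginv5]
  · have ht : tupT S' = perm6 (tupT S) :=
      E5_inj (by rw [← cfg_eq S', himg, cfg_eq S]; exact img6 M u h00 h01 h10 h11 hu1 hu2 _)
    rw [ht, ginv6]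
  · have ht : tupT S' = perm7 (tupT S) :=
      E5_inj (by rw [← cfg_eq S', himg, cfg_eq S]; exact img7 M u h00 h01 h10 h11 hu1 hu2 _)
    rw [ht, ginv7]
  · have ht : tupT S' = perm8 (tupT S) :=
      E5_inj (by rw [← cfg_eq S', himg, cfg_eq S]; exact img8 M u h00 h01 h10 h11 hu1 hu2 _)
    rw [ht, ginv8]

/- ### every configuration is equivalent to its representative -/

lemma main_equiv (S : Config) : equivRel (repC (g (tupT S))) S := by
  rcases exists_sigma (tupT S) with hσ|hσ|hσ|hσ|hσ|hσ|hσ|hσ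
  · refine ⟨!![1,0;0,1], Or.inl (by rw [Matrix.det_fin_two_of]; norm_num), (0,0), ?_⟩
    calc S.1 = E5 (tupT S) := cfg_eq S
    _ = E5 (perm1 (repT (g (tupT S)))) := by rw [hσ]
    _ = affAct !![1,0;0,1] (0,0) '' E5 (repT (g (tupT S))) :=
        (img1 !![1,0;0,1] (0,0) (by decide) (by decide) (by decide) (by decide) rfl rfl _).symm
  · refine ⟨!![0,-1;1,0], Or.inl (by rw [Matrix.det_fin_two_of]; norm_num), (2,0), ?_⟩
    calc S.1 = E5 (tupT S) := cfg_eq S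
    _ = E5 (perm2 (repT (g (tupT S)))) := by rw [hσ]
    _ = affAct !![0,-1;1,0] (2,0) '' E5 (repT (g (tupT S))) :=
        (img2 !![0,-1;1,0] (2,0) (by decide) (by decide) (by decide) (by decide) rfl rfl _).symm
  · refine ⟨!![-1,0;0,-1], Or.inl (by rw [Matrix.det_fin_two_of]; norm_num), (2,2), ?_⟩
    calc S.1 = E5 (tupT S) := cfg_eq S
    _ = E5 (perm3 (repT (g (tupT S)))) := by rw [hσ]
    _ = affAct !![-1,0;0,-1] (2,2) '' E5 (repT (g (tupT S))) :=
        (img3 !![-1,0;0,-1] (2,2) (by decide) (by decide) (by decide) (by decide) rfl rfl _).symm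
  · refine ⟨!![0,1;-1,0], Or.inl (by rw [Matrix.det_fin_two_of]; norm_num), (0,2), ?_⟩
    calc S.1 = E5 (tupT S) := cfg_eq S
    _ = E5 (perm4 (repT (g (tupT S)))) := by rw [hσ]
    _ = affAct !![0,1;-1,0] (0,2) '' E5 (repT (g (tupT S))) :=
        (img4 !![0,1;-1,0] (0,2) (by decide) (by decide) (by decide) (by decide) rfl rfl _).symm
  · refine ⟨!![-1,0;0,1], Or.inr (by rw [Matrix.det_fin_two_of]; norm_num), (2,0), ?_⟩
    calc S.1 = E5 (tupT S) := cfg_eq S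
    _ = E5 (perm5 (repT (g (tupT S)))) := by rw [hσ]
    _ = affAct !![-1,0;0,1] (2,0) '' E5 (repT (g (tupT S))) :=
        (img5 !![-1,0;0,1] (2,0) (by decide) (by decide) (by decide) (by decide) rfl rfl _).symm
  · refine ⟨!![1,0;0,-1], Or.inr (by rw [Matrix.det_fin_two_of]; norm_num), (0,2), ?_⟩
    calc S.1 = E5 (tupT S) := cfg_eq S
    _ = E5 (perm6 (repT (g (tupT S)))) := by rw [hσ]
    _ = affAct !![1,0;0,-1] (0,2) '' E5 (repT (g (tupT S))) :=
        (img6 !![1,0;0,-1] (0,2) (by decide) (by decide) (by decide) (by decide) rfl rfl _).symm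
  · refine ⟨!![0,1;1,0], Or.inr (by rw [Matrix.det_fin_two_of]; norm_num), (0,0), ?_⟩
    calc S.1 = E5 (tupT S) := cfg_eq S
    _ = E5 (perm7 (repT (g (tupT S)))) := by rw [hσ]
    _ = affAct !![0,1;1,0] (0,0) '' E5 (repT (g (tupT S))) :=
        (img7 !![0,1;1,0] (0,0) (by decide) (by decide) (by decide) (by decide) rfl rfl _).symm
  · refine ⟨!![0,-1;-1,0], Or.inr (by rw [Matrix.det_fin_two_of]; norm_num), (2,2), ?_⟩
    calc S.1 = E5 (tupT S) := cfg_eq S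
    _ = E5 (perm8 (repT (g (tupT S)))) := by rw [hσ]
    _ = affAct !![0,-1;-1,0] (2,2) '' E5 (repT (g (tupT S))) :=
        (img8 !![0,-1;-1,0] (2,2) (by decide) (by decide) (by decide) (by decide) rfl rfl _).symm

/- ### assembly -/

noncomputable def theEquiv : Quot equivRel ≃ Fin 12 where
  toFun := Quot.lift (fun S => g (tupT S)) (fun _ _ h => (equiv_tup h).symm)
  invFun i := Quot.mk _ (repC i)
  left_inv q := Quot.inductionOn q fun S => Quot.sound (main_equiv S)
  right_inv i :=
    (congrArg g (tupT_E (repT i) ⟨verts_sub_E _, E_sub_square _⟩)).trans (g_repT i)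


/-- There are exactly 12 equivalence classes of subsets of the lattice square
`([0,2] × [0,2]) ∩ ℤ²` containing the four vertices, up to affine lattice
equivalence. -/
theorem card_classes_eq_twelve : Nat.card (Quot equivRel) = 12 :=
  Nat.card_eq_of_equiv_fin theEquiv
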